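/- The matrix P_{n,k} = (1/n)·I_{n,k}ᵀ·I_{n,k} is the orthogonal projection onto the row space of Î_{n,k}: P_{n,k} is symmetric, P_{n,k}² = P_{n,k}, and for every vector v in the space indexed by the (k+1)-element subsets of {1,…,n}, P_{n,k} v lies in the row space of Î_{n,k} and v − P_{n,k} v is orthogonal to the row space of Î_{n,k}. -/

import Mathlib

open Matrix
/-- The entry of the boundary matrix `I_{n,k}`: for a `k`-element subset `Y` and a
`(k+1)`-element subset `X = {x_0 < x_1 < ⋯ < x_k}` of `Fin n`, the entry is `(-1)^i` if
`Y = X \ {x_i}`, and `0` otherwise. -/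
noncomputable def Ient (n k : ℕ) (Y X : Finset (Fin n)) : ℝ :=
  if Y ⊆ X ∧ Y.card = k ∧ X.card = k + 1 then
    (-1 : ℝ) ^ (X.filter (fun a => ∀ b ∈ X \ Y, a < b)).card
  else 0

/-- The matrix `I_{n,k}`, with rows indexed by `k`-element subsets and columns indexed by
`(k+1)`-element subsets of `Fin n`. -/
noncomputable def Imat (n k : ℕ) :
    Matrix {Y : Finset (Fin n) // Y.card = k} {X : Finset (Fin n) // X.card = k + 1} ℝ :=
  Matrix.of fun Y X => Ient n k Y.1 X.1

/-- The matrix `P_{n,k} = (1/n)·I_{n,k}ᵀ·I_{n,k}`. -/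
noncomputable def Pmat (n k : ℕ) :
    Matrix {X : Finset (Fin n) // X.card = k + 1} {X : Finset (Fin n) // X.card = k + 1} ℝ :=
  (n : ℝ)⁻¹ • ((Imat n k)ᵀ * Imat n k)

/-- The row space of `Î_{n,k}`: the span of the rows of `I_{n,k}` indexed by the
`k`-element subsets of `{1,…,n-1}`. -/
noncomputable def rowSpaceHat (n k : ℕ) :
    Submodule ℝ ({X : Finset (Fin n) // X.card = k + 1} → ℝ) :=
  Submodule.span ℝ
    (Set.range (fun (Y : {Y : Finset (Fin n) // Y.card = k ∧ ∀ a ∈ Y, (a : ℕ) < n - 1}) =>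
      (fun (X : {X : Finset (Fin n) // X.card = k + 1}) => Ient n k Y.1 X.1)))

/-!
Write `∂ₖ = I_{n,k}`. These are the boundary maps of the full simplex on `n` vertices, so
`∂ₖ ∂ₖ₊₁ = 0`, and they satisfy the Laplacian identity `∂ₖ₊₁ ∂ₖ₊₁ᵀ + ∂ₖᵀ ∂ₖ = n · 1`. For `k ≥ 1`
the two give `I Iᵀ I = n I` with `I = I_{n,k}`, and this alone makes `(1/n) IᵀI` the orthogonal
projection onto the row space of `I`. That row space is already spanned by the rows of `Î_{n,k}`:
if `Y` contains the last vertex `t`, the row of `∂ₖ ∂ₖ₊₁ = 0` indexed by `Y \ {t}` expresses the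
row `Y` through rows indexed by sets avoiding `t`.
-/

open Finset

section Projection

variable {ι κ R : Type*} [Fintype ι] [Fintype κ] [CommRing R] {A : Matrix ι κ R} {c : R}

theorem mul_smul_transpose_mul_self (hA : c • (A * Aᵀ * A) = A) : A * (c • (Aᵀ * A)) = A := by
  rw [Matrix.mul_smul, ← Matrix.mul_assoc, hA]

theorem isIdempotentElem_smul_transpose_mul_self (hA : c • (A * Aᵀ * A) = A) :
    IsIdempotentElem (c • (Aᵀ * A)) := by
  rw [IsIdempotentElem, Matrix.smul_mul, Matrix.mul_assoc, mul_smul_transpose_mul_self hA]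

theorem smul_transpose_mul_self_mulVec_mem_span_row (A : Matrix ι κ R) (c : R) (v : κ → R) :
    (c • (Aᵀ * A)) *ᵥ v ∈ Submodule.span R (Set.range A.row) := by
  rw [← range_vecMulLinear, smul_mulVec, ← mulVec_mulVec, ← mulVec_smul, mulVec_transpose]
  exact ⟨_, rfl⟩

theorem dotProduct_sub_smul_transpose_mul_self_mulVec (hA : c • (A * Aᵀ * A) = A) (v : κ → R)
    {w : κ → R} (hw : w ∈ Submodule.span R (Set.range A.row)) :
    (v - (c • (Aᵀ * A)) *ᵥ v) ⬝ᵥ w = 0 := by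
  rw [← range_vecMulLinear] at hw
  obtain ⟨u, rfl⟩ := hw
  rw [vecMulLinear_apply, ← mulVec_transpose, dotProduct_mulVec, vecMul_transpose, mulVec_sub,
    mulVec_mulVec, mul_smul_transpose_mul_self hA, sub_self, zero_dotProduct]

end Projection

section FixedCard

variable {α M : Type*} [Fintype α] [AddCommMonoid M] {s : Finset α} {k : ℕ}

theorem card_filter_superset_of_card_succ [DecidableEq α] (hs : #s = k) :
    #{t : {t : Finset α // #t = k + 1} | s ⊆ t.1} = Fintype.card α - k := by
  rw [← card_map (Function.Embedding.subtype _), ← hs, ← card_compl,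
    ← card_image_of_injOn (f := (insert · s)) fun a ha b _ h => (insert_inj (mem_compl.mp ha)).mp h]
  congr 1
  ext t
  simp only [mem_map, mem_filter, mem_univ, true_and, Function.Embedding.coe_subtype,
    Subtype.exists, exists_and_right, exists_eq_right, mem_image, mem_compl]
  rw [exists_eq_insert_iff, hs]
  tauto

theorem card_filter_subset_of_card_pred [DecidableEq α] (hs : #s = k + 1) :
    #{t : {t : Finset α // #t = k} | t.1 ⊆ s} = k + 1 := by
  rw [← card_map (Function.Embedding.subtype _), ← Nat.choose_succ_self_right, ← hs,
    ← card_powersetCard]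
  congr 1
  ext t
  simp [mem_powersetCard, and_comm]

theorem sum_card_eq_of_superset (g : Finset α → M) (hg : ∀ t, g t ≠ 0 → s ⊆ t) (hs : k ≤ #s) :
    ∑ t : {t : Finset α // #t = k}, g t = if #s = k then g s else 0 := by
  split_ifs with h
  · refine sum_eq_single_of_mem (f := fun t : {t : Finset α // #t = k} => g t) ⟨s, h⟩
      (mem_univ _) fun t _ ht => not_not.mp fun hgt => ht (Subtype.ext ?_)
    exact (eq_of_subset_of_card_le (hg t hgt) (by rw [h, t.2])).symm
  · exact sum_eq_zero fun t _ => not_not.mp fun hgt =>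
      h (le_antisymm (t.2 ▸ card_le_card (hg t hgt)) hs)

theorem sum_card_eq_of_subset (g : Finset α → M) (hg : ∀ t, g t ≠ 0 → t ⊆ s) (hs : #s ≤ k) :
    ∑ t : {t : Finset α // #t = k}, g t = if #s = k then g s else 0 := by
  split_ifs with h
  · refine sum_eq_single_of_mem (f := fun t : {t : Finset α // #t = k} => g t) ⟨s, h⟩
      (mem_univ _) fun t _ ht => not_not.mp fun hgt => ht (Subtype.ext ?_)
    exact eq_of_subset_of_card_le (hg t hgt) (by rw [h, t.2])
  · exact sum_eq_zero fun t _ => not_not.mp fun hgt =>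
      h (le_antisymm hs (t.2 ▸ card_le_card (hg t hgt)))

end FixedCard

section Boundary

variable {n k : ℕ} {X Y Z : Finset (Fin n)} {b b' : Fin n}

theorem subset_of_Ient_ne_zero (h : Ient n k Y X ≠ 0) : Y ⊆ X :=
  not_not.mp fun h' => h (if_neg fun h'' => h' h''.1)

theorem Ient_insert (hb : b ∉ Y) (hY : #Y = k) :
    Ient n k Y (insert b Y) = (-1) ^ #{y ∈ Y | y < b} := by
  rw [Ient, if_pos ⟨subset_insert b Y, hY, by rw [card_insert_of_notMem hb, hY]⟩]
  simp [insert_sdiff_of_notMem _ hb, filter_insert]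

theorem Ient_mul_self (hY : #Y = k) (hX : #X = k + 1) :
    Ient n k Y X * Ient n k Y X = if Y ⊆ X then 1 else 0 := by
  split_ifs with h
  · rw [Ient, if_pos ⟨h, hY, hX⟩, ← pow_add, ← two_mul, pow_mul, neg_one_sq, one_pow]
  · rw [Ient, if_neg fun h' => h h'.1, zero_mul]

theorem Ient_ne_zero (h : Y ⊆ X) (hY : #Y = k) (hX : #X = k + 1) : Ient n k Y X ≠ 0 :=
  left_ne_zero_of_mul_eq_one ((Ient_mul_self hY hX).trans (if_pos h))

-- The two ways of going from `Z` to `Z ∪ {b, b'}` one element at a time carry opposite signs.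
theorem Ient_insert_mul_add_Ient_insert_mul (hZ : #Z = k) (hb : b ∉ Z) (hb' : b' ∉ Z)
    (hbb' : b ≠ b') :
    Ient n k Z (insert b Z) * Ient n (k + 1) (insert b Z) (insert b' (insert b Z)) +
      Ient n k Z (insert b' Z) * Ient n (k + 1) (insert b' Z) (insert b' (insert b Z)) = 0 := by
  have hbZ' : b ∉ insert b' Z := by simp [hbb', hb]
  have hb'Z : b' ∉ insert b Z := by simp [hbb'.symm, hb']
  rw [Ient_insert hb hZ, Ient_insert hb' hZ,
    Ient_insert hb'Z (by rw [card_insert_of_notMem hb, hZ]), insert_comm b' b,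
    Ient_insert hbZ' (by rw [card_insert_of_notMem hb', hZ]), filter_insert, filter_insert]
  rcases hbb'.lt_or_gt with h | h
  · simp only [h, h.not_gt, ↓reduceIte, mem_filter, hb, and_true, not_false_eq_true,
      card_insert_of_notMem, pow_succ, mul_neg, mul_one]
    ring
  · simp only [h, h.not_gt, ↓reduceIte, mem_filter, hb', and_true, not_false_eq_true,
      card_insert_of_notMem, pow_succ, mul_neg, mul_one]
    ring

theorem Ient_mul_Ient_add_Ient_mul_Ient (hZ : #Z = k) (hb : b ∉ Z) (hb' : b' ∉ Z)
    (hbb' : b ≠ b') :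
    Ient n (k + 1) (insert b Z) (insert b' (insert b Z)) *
        Ient n (k + 1) (insert b' Z) (insert b' (insert b Z)) +
      Ient n k Z (insert b Z) * Ient n k Z (insert b' Z) = 0 := by
  have hbZ : #(insert b Z) = k + 1 := by rw [card_insert_of_notMem hb, hZ]
  have hb'Z : #(insert b' Z) = k + 1 := by rw [card_insert_of_notMem hb', hZ]
  have hX : #(insert b' (insert b Z)) = k + 1 + 1 := by
    rw [card_insert_of_notMem (by simp [hbb'.symm, hb']), hbZ]
  have h₁ := (Ient_mul_self hZ hbZ).trans (if_pos (subset_insert b Z))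
  have h₂ := (Ient_mul_self hb'Z hX).trans
    (if_pos (insert_subset_insert b' (subset_insert b Z)))
  -- multiply the two-path identity by `I(Z, Z ∪ {b}) * I(Z ∪ {b'}, X)`; nonzero entries square to 1
  linear_combination (Ient n k Z (insert b Z) *
      Ient n (k + 1) (insert b' Z) (insert b' (insert b Z))) *
        Ient_insert_mul_add_Ient_insert_mul (n := n) hZ hb hb' hbb' -
    Ient n (k + 1) (insert b Z) (insert b' (insert b Z)) *
      Ient n (k + 1) (insert b' Z) (insert b' (insert b Z)) * h₁ -
    Ient n k Z (insert b Z) * Ient n k Z (insert b' Z) * h₂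

theorem Imat_mul_Imat : Imat n k * Imat n (k + 1) = 0 := by
  ext Z X
  simp only [mul_apply, Imat, of_apply, Matrix.zero_apply]
  by_cases hZX : Z.1 ⊆ X.1
  · obtain ⟨b, b', hbb', hXZ⟩ := card_eq_two.mp (show #(X.1 \ Z.1) = 2 by
      rw [card_sdiff_of_subset hZX, X.2, Z.2]; omega)
    have hb : b ∉ Z.1 := (mem_sdiff.mp (hXZ ▸ mem_insert_self b {b'})).2
    have hb' : b' ∉ Z.1 := (mem_sdiff.mp (hXZ ▸ mem_insert_of_mem (mem_singleton_self b'))).2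
    have hX : X.1 = insert b' (insert b Z.1) := by
      rw [insert_comm, ← union_sdiff_of_subset hZX, hXZ]; ext; simp
    rw [hX, sum_eq_add_of_mem (⟨insert b Z.1, by rw [card_insert_of_notMem hb, Z.2]⟩ : {Y // _})
      ⟨insert b' Z.1, by rw [card_insert_of_notMem hb', Z.2]⟩ (mem_univ _) (mem_univ _)
      (fun h => hbb' ((insert_inj hb).mp (congrArg Subtype.val h)))]
    · exact Ient_insert_mul_add_Ient_insert_mul Z.2 hb hb' hbb'
    · rintro ⟨Y, hY⟩ - ⟨hYb, hYb'⟩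
      by_contra h
      obtain ⟨a, ha, rfl⟩ := exists_eq_insert_iff.mpr
        ⟨subset_of_Ient_ne_zero (left_ne_zero_of_mul h), by rw [Z.2, hY]⟩
      have haX := subset_of_Ient_ne_zero (right_ne_zero_of_mul h) (mem_insert_self a Z.1)
      rcases mem_insert.mp haX with rfl | haX
      · exact hYb' rfl
      · rcases mem_insert.mp haX with rfl | haZ
        exacts [hYb rfl, ha haZ]
  · refine sum_eq_zero fun Y _ => not_not.mp fun h => hZX ?_
    exact (subset_of_Ient_ne_zero (left_ne_zero_of_mul h)).trans
      (subset_of_Ient_ne_zero (right_ne_zero_of_mul h))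

theorem Imat_mul_transpose_apply_self (Y : {Y : Finset (Fin n) // #Y = k}) :
    (Imat n k * (Imat n k)ᵀ) Y Y = n - k := by
  have hk : k ≤ n := Y.2 ▸ (card_le_univ Y.1).trans_eq (Fintype.card_fin n)
  simp only [mul_apply, transpose_apply, Imat, of_apply]
  rw [sum_congr rfl fun X _ => Ient_mul_self Y.2 X.2, sum_boole,
    card_filter_superset_of_card_succ Y.2, Fintype.card_fin, Nat.cast_sub hk]

theorem transpose_Imat_mul_apply_self (X : {X : Finset (Fin n) // #X = k + 1}) :
    ((Imat n k)ᵀ * Imat n k) X X = k + 1 := by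
  simp only [mul_apply, transpose_apply, Imat, of_apply]
  rw [sum_congr rfl fun Z _ => Ient_mul_self Z.2 X.2, sum_boole,
    card_filter_subset_of_card_pred X.2, Nat.cast_succ]

theorem Imat_mul_transpose_add_transpose_mul_apply_of_ne
    {Y Y' : {Y : Finset (Fin n) // #Y = k + 1}} (hne : Y ≠ Y') :
    (Imat n (k + 1) * (Imat n (k + 1))ᵀ + (Imat n k)ᵀ * Imat n k) Y Y' = 0 := by
  simp only [Matrix.add_apply, mul_apply, transpose_apply, Imat, of_apply]
  have hne : Y.1 ≠ Y'.1 := fun h => hne (Subtype.ext h)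
  have hcard : #(Y.1 ∪ Y'.1) + #(Y.1 ∩ Y'.1) = k + 1 + (k + 1) := by
    rw [card_union_add_card_inter, Y.2, Y'.2]
  have hinter : #(Y.1 ∩ Y'.1) ≤ k := by
    by_contra! h
    have hY : Y.1 ∩ Y'.1 = Y.1 := eq_of_subset_of_card_le inter_subset_left (by rw [Y.2]; omega)
    have hY' : Y.1 ∩ Y'.1 = Y'.1 :=
      eq_of_subset_of_card_le inter_subset_right (by rw [Y'.2]; omega)
    exact hne (hY.symm.trans hY')
  rw [sum_card_eq_of_superset (s := Y.1 ∪ Y'.1)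
      (fun X => Ient n (k + 1) Y.1 X * Ient n (k + 1) Y'.1 X) ?_ (by omega),
    sum_card_eq_of_subset (s := Y.1 ∩ Y'.1)
      (fun Z => Ient n k Z Y.1 * Ient n k Z Y'.1) ?_ hinter]
  · by_cases hi : #(Y.1 ∩ Y'.1) = k
    · rw [if_pos (by omega), if_pos hi]
      obtain ⟨b, hb, hbY⟩ := exists_eq_insert_iff.mpr ⟨inter_subset_left, by rw [hi, Y.2]⟩
      obtain ⟨b', hb', hbY'⟩ := exists_eq_insert_iff.mpr ⟨inter_subset_right, by rw [hi, Y'.2]⟩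
      have hbb' : b ≠ b' := by rintro rfl; exact hne (hbY.symm.trans hbY')
      generalize Y.1 ∩ Y'.1 = Z at *
      rw [← hbY, ← hbY', insert_union, union_insert, union_self, insert_comm]
      exact Ient_mul_Ient_add_Ient_mul_Ient hi hb hb' hbb'
    · rw [if_neg (by omega), if_neg hi, add_zero]
  · exact fun Z h => subset_inter (subset_of_Ient_ne_zero (left_ne_zero_of_mul h))
      (subset_of_Ient_ne_zero (right_ne_zero_of_mul h))
  · exact fun X h => union_subset (subset_of_Ient_ne_zero (left_ne_zero_of_mul h))
      (subset_of_Ient_ne_zero (right_ne_zero_of_mul h))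

theorem Imat_mul_transpose_add_transpose_mul :
    Imat n (k + 1) * (Imat n (k + 1))ᵀ + (Imat n k)ᵀ * Imat n k = (n : ℝ) • 1 := by
  ext Y Y'
  rcases eq_or_ne Y Y' with rfl | hne
  · rw [Matrix.add_apply, Imat_mul_transpose_apply_self, transpose_Imat_mul_apply_self,
      Matrix.smul_apply, one_apply_eq, smul_eq_mul, mul_one]
    push_cast
    ring
  · rw [Imat_mul_transpose_add_transpose_mul_apply_of_ne hne, Matrix.smul_apply, one_apply_ne hne,
      smul_zero]

theorem Imat_mul_transpose_mul_self :
    Imat n (k + 1) * (Imat n (k + 1))ᵀ * Imat n (k + 1) = (n : ℝ) • Imat n (k + 1) := by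
  rw [← add_sub_cancel_right (Imat n (k + 1) * (Imat n (k + 1))ᵀ) ((Imat n k)ᵀ * Imat n k),
    Imat_mul_transpose_add_transpose_mul, Matrix.sub_mul, Matrix.mul_assoc _ (Imat n k),
    Imat_mul_Imat, Matrix.mul_zero, sub_zero, Matrix.smul_mul, Matrix.one_mul]

theorem row_mem_rowSpaceHat (Y : {Y : Finset (Fin n) // #Y = k + 1}) :
    (Imat n (k + 1)).row Y ∈ rowSpaceHat n (k + 1) := by
  by_cases hY : ∀ a ∈ Y.1, (a : ℕ) < n - 1
  · exact Submodule.subset_span ⟨⟨Y.1, Y.2, hY⟩, rfl⟩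
  push Not at hY
  obtain ⟨t, htY, ht⟩ := hY
  have hlt : ∀ a : Fin n, a ≠ t → (a : ℕ) < n - 1 := fun a ha => by
    have := Fin.val_ne_of_ne ha; omega
  let Z : {Z : Finset (Fin n) // #Z = k} := ⟨Y.1.erase t, by rw [card_erase_of_mem htY, Y.2]; rfl⟩
  have hsum : ∑ Y', Imat n k Z Y' • (Imat n (k + 1)).row Y' = 0 :=
    (vecMul_eq_sum _ _).symm.trans (congrFun Imat_mul_Imat Z)
  have hother : ∀ Y' ≠ Y, Imat n k Z Y' • (Imat n (k + 1)).row Y' ∈ rowSpaceHat n (k + 1) := by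
    intro Y' hY'
    by_cases h : Imat n k Z Y' = 0
    · rw [h, zero_smul]; exact zero_mem _
    refine Submodule.smul_mem _ _ (Submodule.subset_span ⟨⟨Y'.1, Y'.2, fun a ha => hlt a ?_⟩, rfl⟩)
    rintro rfl
    refine hY' (Subtype.ext (eq_of_subset_of_card_le ?_ (by rw [Y.2, Y'.2])).symm)
    rw [← insert_erase htY]
    exact insert_subset ha (subset_of_Ient_ne_zero h)
  rw [← add_sum_erase _ _ (mem_univ Y)] at hsum
  have hmem : Imat n k Z Y • (Imat n (k + 1)).row Y ∈ rowSpaceHat n (k + 1) := by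
    rw [eq_neg_of_add_eq_zero_left hsum]
    exact neg_mem (sum_mem fun Y' hY' => hother Y' (ne_of_mem_erase hY'))
  exact (Submodule.smul_mem_iff _ (Ient_ne_zero (erase_subset t Y.1) Z.2 Y.2)).mp hmem

theorem rowSpaceHat_eq_span_row :
    rowSpaceHat n (k + 1) = Submodule.span ℝ (Set.range (Imat n (k + 1)).row) :=
  le_antisymm
    (Submodule.span_le.mpr (Set.range_subset_iff.mpr fun Y =>
      Submodule.subset_span ⟨⟨Y.1, Y.2.1⟩, rfl⟩))
    (Submodule.span_le.mpr (Set.range_subset_iff.mpr row_mem_rowSpaceHat))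

end Boundary

/-- `P_{n,k} = (1/n)·I_{n,k}ᵀ·I_{n,k}` is the orthogonal projection onto the row space of
`Î_{n,k}`: it is symmetric, idempotent, `P v` lies in the row space, and `v - P v` is
orthogonal to the row space. -/
theorem stmt3 (n k : ℕ) (hk : 1 ≤ k) (hkn : k < n) :
    (Pmat n k)ᵀ = Pmat n k ∧
    Pmat n k * Pmat n k = Pmat n k ∧
    (∀ v : {X : Finset (Fin n) // X.card = k + 1} → ℝ,
      (Pmat n k).mulVec v ∈ rowSpaceHat n k) ∧
    (∀ v : {X : Finset (Fin n) // X.card = k + 1} → ℝ,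
      ∀ w ∈ rowSpaceHat n k, dotProduct (v - (Pmat n k).mulVec v) w = 0) := by
  obtain ⟨k, rfl⟩ := Nat.exists_eq_add_of_le' hk
  have hI : (n : ℝ)⁻¹ • (Imat n (k + 1) * (Imat n (k + 1))ᵀ * Imat n (k + 1)) = Imat n (k + 1) := by
    rw [Imat_mul_transpose_mul_self, inv_smul_smul₀ (Nat.cast_ne_zero.mpr (by omega))]
  rw [rowSpaceHat_eq_span_row, Pmat]
  exact ⟨by rw [transpose_smul, transpose_mul, transpose_transpose],
    isIdempotentElem_smul_transpose_mul_self hI,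
    smul_transpose_mul_self_mulVec_mem_span_row _ _,
    fun v _ => dotProduct_sub_smul_transpose_mul_self_mulVec hI v⟩
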